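/- arXiv:0711.3400 — 8 statements merged into one kernel-verified Lean document; each statement's English description precedes it below -/
import Mathlib

section
/- Let μ be a probability measure on ℝ² with continuous marginal cumulative distribution functions F_X and F_Y, joint cumulative distribution function F, support S, and d_τ(x,y) := F(x,y) − (F_X(x)+F_Y(y))/2. Suppose there exist real numbers x₁ < x* < x₂ and y₁ < y* < y₂ such that the five points (x₁,y₁), (x₁,y₂), (x₂,y₁), (x₂,y₂), (x*,y*) all lie in S (four vertices of a rectangle with sides parallel to the axes, together with an interior point of that rectangle). Then d_τ is not constant on S, i.e., there exist points p, q ∈ S with d_τ(p) ≠ d_τ(q). -/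
open MeasureTheory Set

theorem stmt_6
    (μ : Measure (ℝ × ℝ)) [IsProbabilityMeasure μ]
    (F : ℝ → ℝ → ℝ) (FX FY : ℝ → ℝ) (dτ : ℝ × ℝ → ℝ)
    (hF : ∀ x y, F x y = (μ (Iic x ×ˢ Iic y)).toReal)
    (hFX : ∀ x, FX x = (μ (Iic x ×ˢ (univ : Set ℝ))).toReal)
    (hFY : ∀ y, FY y = (μ ((univ : Set ℝ) ×ˢ Iic y)).toReal)
    (hFXcont : Continuous FX) (hFYcont : Continuous FY)
    (hdτ : ∀ p : ℝ × ℝ, dτ p = F p.1 p.2 - (FX p.1 + FY p.2) / 2)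
    (S : Set (ℝ × ℝ))
    (hSclosed : IsClosed S) (hSfull : μ Sᶜ = 0)
    (hSmin : ∀ T : Set (ℝ × ℝ), IsClosed T → μ Tᶜ = 0 → S ⊆ T)
    (x₁ xs x₂ y₁ ys y₂ : ℝ)
    (hx1 : x₁ < xs) (hx2 : xs < x₂) (hy1 : y₁ < ys) (hy2 : ys < y₂)
    (h11 : (x₁, y₁) ∈ S) (h12 : (x₁, y₂) ∈ S)
    (h21 : (x₂, y₁) ∈ S) (h22 : (x₂, y₂) ∈ S)
    (hss : (xs, ys) ∈ S) :
    ∃ p ∈ S, ∃ q ∈ S, dτ p ≠ dτ q := by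
  by_contra hcon
  push_neg at hcon
  have hx : x₁ < x₂ := hx1.trans hx2
  have hy : y₁ < y₂ := hy1.trans hy2
  set A := Iic x₁ ×ˢ Iic y₂ with hA
  set B := Iic x₂ ×ˢ Iic y₁ with hB
  set C := Iic x₂ ×ˢ Iic y₂ with hC
  set D := Iic x₁ ×ˢ Iic y₁ with hD
  set R := Ioc x₁ x₂ ×ˢ Ioc y₁ y₂ with hR
  have hABC : (A ∪ B) ∪ R = C := by
    ext ⟨a, b⟩
    simp only [hA, hB, hC, hR, mem_union, mem_prod, mem_Iic, mem_Ioc]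
    constructor
    · rintro ((⟨h1, h2⟩ | ⟨h1, h2⟩) | ⟨⟨h1, h1'⟩, ⟨h2, h2'⟩⟩) <;>
        exact ⟨by linarith, by linarith⟩
    · rintro ⟨h1, h2⟩
      rcases le_or_gt a x₁ with ha | ha
      · exact Or.inl (Or.inl ⟨ha, h2⟩)
      · rcases le_or_gt b y₁ with hb | hb
        · exact Or.inl (Or.inr ⟨h1, hb⟩)
        · exact Or.inr ⟨⟨ha, h1⟩, ⟨hb, h2⟩⟩
  have hdisj : Disjoint (A ∪ B) R := by
    rw [Set.disjoint_left]
    rintro ⟨a, b⟩ hab hab'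
    simp only [hA, hB, hR, mem_union, mem_prod, mem_Iic, mem_Ioc] at hab hab'
    rcases hab with ⟨h1, _⟩ | ⟨_, h2⟩
    · exact absurd h1 (not_le.2 hab'.1.1)
    · exact absurd h2 (not_le.2 hab'.2.1)
  have hABD : A ∩ B = D := by
    rw [hA, hB, hD, Set.prod_inter_prod, Iic_inter_Iic, Iic_inter_Iic,
      min_eq_left hx.le, min_eq_right hy.le]
  have mR : MeasurableSet R := measurableSet_Ioc.prod measurableSet_Ioc
  have mB : MeasurableSet B := measurableSet_Iic.prod measurableSet_Iic
  have e1 : μ C = μ (A ∪ B) + μ R := by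
    rw [← hABC, measure_union hdisj mR]
  have e2 : μ (A ∪ B) + μ D = μ A + μ B := by
    rw [← hABD]; exact measure_union_add_inter A mB
  have key : F x₁ y₂ + F x₂ y₁ = F x₁ y₁ + F x₂ y₂ := by
    have ha := hcon _ h12 _ h11
    have hb := hcon _ h21 _ h22
    simp only [hdτ] at ha hb
    linarith
  have hFA : F x₁ y₂ = (μ A).toReal := by rw [hA]; exact hF x₁ y₂
  have hFB : F x₂ y₁ = (μ B).toReal := by rw [hB]; exact hF x₂ y₁
  have hFC : F x₂ y₂ = (μ C).toReal := by rw [hC]; exact hF x₂ y₂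
  have hFD : F x₁ y₁ = (μ D).toReal := by rw [hD]; exact hF x₁ y₁
  have e1r : (μ C).toReal = (μ (A ∪ B)).toReal + (μ R).toReal := by
    rw [e1, ENNReal.toReal_add (measure_ne_top _ _) (measure_ne_top _ _)]
  have e2r : (μ (A ∪ B)).toReal + (μ D).toReal = (μ A).toReal + (μ B).toReal := by
    rw [← ENNReal.toReal_add (measure_ne_top _ _) (measure_ne_top _ _),
      ← ENNReal.toReal_add (measure_ne_top _ _) (measure_ne_top _ _), e2]
  have hRr : (μ R).toReal = 0 := by
    rw [hFA, hFB, hFC, hFD] at key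
    linarith
  have hR0 : μ R = 0 := by
    rcases (ENNReal.toReal_eq_zero_iff _).mp hRr with h | h
    · exact h
    · exact absurd h (measure_ne_top _ _)
  have hU0 : μ (Ioo x₁ x₂ ×ˢ Ioo y₁ y₂) = 0 := by
    refine measure_mono_null ?_ hR0
    rw [hR]
    exact Set.prod_mono Ioo_subset_Ioc_self Ioo_subset_Ioc_self
  have hsub : S ⊆ (Ioo x₁ x₂ ×ˢ Ioo y₁ y₂)ᶜ := by
    refine hSmin _ ((isOpen_Ioo.prod isOpen_Ioo).isClosed_compl) ?_
    rwa [compl_compl]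
  exact hsub hss ⟨⟨hx1, hx2⟩, ⟨hy1, hy2⟩⟩
end

section
/- Let μ be a probability measure on ℝ² with continuous marginal cumulative distribution functions F_X and F_Y, joint cumulative distribution function F, support S, and d_τ(x,y) := F(x,y) − (F_X(x)+F_Y(y))/2. If the topological interior of S is nonempty, then d_τ is not constant on S. -/
/-! If `d_τ` were constant on `S`, it would in particular take the same value at the four corners
of a small closed rectangle inside `S`. The marginal terms of `d_τ` then cancel in the second
difference of `F` over the rectangle, which is its `μ`-mass; so the rectangle would be a `μ`-null
neighbourhood of a point of the support, contradicting minimality of the support. -/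

open MeasureTheory Set

section Rectangle

variable {α β : Type*} [MeasurableSpace α] [MeasurableSpace β]
  (μ : Measure (α × β)) [IsFiniteMeasure μ]

lemma measureReal_Iic_prod_eq_add [LinearOrder α] [TopologicalSpace α] [OrderClosedTopology α]
    [OpensMeasurableSpace α] {a₁ a₂ : α} (ha : a₁ ≤ a₂) {t : Set β} (ht : MeasurableSet t) :
    μ.real (Iic a₂ ×ˢ t) = μ.real (Iic a₁ ×ˢ t) + μ.real (Ioc a₁ a₂ ×ˢ t) := by
  rw [← Iic_union_Ioc_eq_Iic ha, union_prod]
  exact measureReal_union (disjoint_prod.mpr (Or.inl (Iic_disjoint_Ioc le_rfl)))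
    (measurableSet_Ioc.prod ht)

lemma measureReal_prod_Iic_eq_add [LinearOrder β] [TopologicalSpace β] [OrderClosedTopology β]
    [OpensMeasurableSpace β] {b₁ b₂ : β} (hb : b₁ ≤ b₂) {s : Set α} (hs : MeasurableSet s) :
    μ.real (s ×ˢ Iic b₂) = μ.real (s ×ˢ Iic b₁) + μ.real (s ×ˢ Ioc b₁ b₂) := by
  rw [← Iic_union_Ioc_eq_Iic hb, prod_union]
  exact measureReal_union (disjoint_prod.mpr (Or.inr (Iic_disjoint_Ioc le_rfl)))
    (hs.prod measurableSet_Ioc)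

lemma measureReal_Ioc_prod_Ioc [LinearOrder α] [TopologicalSpace α] [OrderClosedTopology α]
    [OpensMeasurableSpace α] [LinearOrder β] [TopologicalSpace β] [OrderClosedTopology β]
    [OpensMeasurableSpace β] {a₁ a₂ : α} {b₁ b₂ : β} (ha : a₁ ≤ a₂) (hb : b₁ ≤ b₂) :
    μ.real (Ioc a₁ a₂ ×ˢ Ioc b₁ b₂) = μ.real (Iic a₂ ×ˢ Iic b₂) - μ.real (Iic a₁ ×ˢ Iic b₂)
      - μ.real (Iic a₂ ×ˢ Iic b₁) + μ.real (Iic a₁ ×ˢ Iic b₁) := by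
  have h₂ := measureReal_Iic_prod_eq_add μ ha measurableSet_Iic (t := Iic b₂)
  have h₁ := measureReal_Iic_prod_eq_add μ ha measurableSet_Iic (t := Iic b₁)
  have h := measureReal_prod_Iic_eq_add μ hb measurableSet_Ioc (s := Ioc a₁ a₂)
  linarith

end Rectangle

lemma IsOpen.measure_pos_of_mem_of_subset_closed_conull {X : Type*} [TopologicalSpace X]
    [MeasurableSpace X] {μ : Measure X} {S U : Set X}
    (hSmin : ∀ T : Set X, IsClosed T → μ Tᶜ = 0 → S ⊆ T) (hU : IsOpen U) {x : X}
    (hxS : x ∈ S) (hxU : x ∈ U) : 0 < μ U := by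
  refine pos_iff_ne_zero.mpr fun hμU => ?_
  exact hSmin Uᶜ hU.isClosed_compl (by rwa [compl_compl]) hxS hxU

lemma exists_Icc_prod_Icc_subset_of_mem_interior {S : Set (ℝ × ℝ)} {p : ℝ × ℝ}
    (hp : p ∈ interior S) : ∃ a₁ a₂ b₁ b₂ : ℝ, p.1 ∈ Ioo a₁ a₂ ∧ p.2 ∈ Ioo b₁ b₂ ∧
      Icc a₁ a₂ ×ˢ Icc b₁ b₂ ⊆ S := by
  obtain ⟨ε, hε, hball⟩ := Metric.mem_nhds_iff.mp (mem_interior_iff_mem_nhds.mp hp)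
  refine ⟨p.1 - ε / 2, p.1 + ε / 2, p.2 - ε / 2, p.2 + ε / 2, ⟨by linarith, by linarith⟩,
    ⟨by linarith, by linarith⟩, ?_⟩
  calc Icc (p.1 - ε / 2) (p.1 + ε / 2) ×ˢ Icc (p.2 - ε / 2) (p.2 + ε / 2)
      = Metric.closedBall p (ε / 2) := by
        rw [← Real.closedBall_eq_Icc, ← Real.closedBall_eq_Icc, closedBall_prod_same]
    _ ⊆ Metric.ball p ε := Metric.closedBall_subset_ball (by linarith)
    _ ⊆ S := hball

theorem stmt_7_general
    (μ : Measure (ℝ × ℝ)) [IsProbabilityMeasure μ]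
    (F : ℝ → ℝ → ℝ) (FX FY : ℝ → ℝ) (dτ : ℝ × ℝ → ℝ)
    (hF : ∀ x y, F x y = (μ (Iic x ×ˢ Iic y)).toReal)
    (hdτ : ∀ p : ℝ × ℝ, dτ p = F p.1 p.2 - (FX p.1 + FY p.2) / 2)
    (S : Set (ℝ × ℝ))
    (hSmin : ∀ T : Set (ℝ × ℝ), IsClosed T → μ Tᶜ = 0 → S ⊆ T)
    (hint : (interior S).Nonempty) :
    ∃ p ∈ S, ∃ q ∈ S, dτ p ≠ dτ q := by
  by_contra! hconst
  obtain ⟨p, hp⟩ := hint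
  obtain ⟨a₁, a₂, b₁, b₂, hpa, hpb, hbox⟩ := exists_Icc_prod_Icc_subset_of_mem_interior hp
  have ha : a₁ ≤ a₂ := (hpa.1.trans hpa.2).le
  have hb : b₁ ≤ b₂ := (hpb.1.trans hpb.2).le
  have hcorner {x y : ℝ} (hx : x ∈ Icc a₁ a₂) (hy : y ∈ Icc b₁ b₂) : dτ (x, y) = dτ (a₁, b₁) :=
    hconst _ (hbox ⟨hx, hy⟩) _ (hbox ⟨left_mem_Icc.2 ha, left_mem_Icc.2 hb⟩)
  have h₁₂ := hcorner (left_mem_Icc.2 ha) (right_mem_Icc.2 hb)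
  have h₂₁ := hcorner (right_mem_Icc.2 ha) (left_mem_Icc.2 hb)
  have h₂₂ := hcorner (right_mem_Icc.2 ha) (right_mem_Icc.2 hb)
  simp only [hdτ, hF] at h₁₂ h₂₁ h₂₂
  have hnull : μ.real (Ioc a₁ a₂ ×ˢ Ioc b₁ b₂) = 0 := by
    rw [measureReal_Ioc_prod_Ioc μ ha hb]
    simp only [measureReal_def]
    linarith
  have hpos : 0 < μ (Ioo a₁ a₂ ×ˢ Ioo b₁ b₂) :=
    (isOpen_Ioo.prod isOpen_Ioo).measure_pos_of_mem_of_subset_closed_conull hSmin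
      (interior_subset hp) ⟨hpa, hpb⟩
  exact ((measureReal_eq_zero_iff).mp hnull).not_gt
    (hpos.trans_le (measure_mono (prod_mono Ioo_subset_Ioc_self Ioo_subset_Ioc_self)))

theorem stmt_7
    (μ : Measure (ℝ × ℝ)) [IsProbabilityMeasure μ]
    (F : ℝ → ℝ → ℝ) (FX FY : ℝ → ℝ) (dτ : ℝ × ℝ → ℝ)
    (hF : ∀ x y, F x y = (μ (Iic x ×ˢ Iic y)).toReal)
    (hFX : ∀ x, FX x = (μ (Iic x ×ˢ (univ : Set ℝ))).toReal)
    (hFY : ∀ y, FY y = (μ ((univ : Set ℝ) ×ˢ Iic y)).toReal)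
    (hFXcont : Continuous FX) (hFYcont : Continuous FY)
    (hdτ : ∀ p : ℝ × ℝ, dτ p = F p.1 p.2 - (FX p.1 + FY p.2) / 2)
    (S : Set (ℝ × ℝ))
    (hSclosed : IsClosed S) (hSfull : μ Sᶜ = 0)
    (hSmin : ∀ T : Set (ℝ × ℝ), IsClosed T → μ Tᶜ = 0 → S ⊆ T)
    (hint : (interior S).Nonempty) :
    ∃ p ∈ S, ∃ q ∈ S, dτ p ≠ dτ q :=
  stmt_7_general μ F FX FY dτ hF hdτ S hSmin hint
end

section
/- Let M be a measurable subset of (0,1]×(0,1] ⊆ ℝ² whose two-dimensional Lebesgue measure satisfies λ₂(M) > 2/3. Then there exist real numbers x₁ < x₂ < x₃ and y₁ < y₂ < y₃ such that all nine points (xᵢ, yⱼ), for i,j ∈ {1,2,3}, belong to M. -/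
/-!
Cut the unit square into three vertical strips of width `1/3` and translate them onto the first
one. The three translated pieces of `M` lie in a strip of area `1/3` and have total area
`> 2/3`, so their common part has positive area. By Fubini some vertical line `x = x₀` meets
that common part in a set of positive length, hence in three points `y₁ < y₂ < y₃`; the nine
points are then `(x₀ + k/3, yⱼ)` for `k = 0, 1, 2`.
-/

open MeasureTheory Set
open scoped ENNReal

theorem Set.Infinite.exists_lt_lt {α : Type*} [LinearOrder α] {s : Set α} (hs : s.Infinite) :
    ∃ a ∈ s, ∃ b ∈ s, ∃ c ∈ s, a < b ∧ b < c := by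
  obtain ⟨t, hts, ht⟩ := hs.exists_subset_card_eq 3
  have mem (i : Fin 3) : t.orderEmbOfFin ht i ∈ s := hts (t.orderEmbOfFin_mem ht i)
  exact ⟨_, mem 0, _, mem 1, _, mem 2,
    (t.orderEmbOfFin ht).strictMono (by decide), (t.orderEmbOfFin ht).strictMono (by decide)⟩

namespace MeasureTheory

theorem measure_iInter_ne_zero_of_card_mul_lt {α ι : Type*} [MeasurableSpace α] [Fintype ι]
    {μ : Measure α} {S : Set α} {A : ι → Set α} (hAS : ∀ i, A i ⊆ S)
    (hA : ∀ i, NullMeasurableSet (A i) μ) (h : Fintype.card ι * μ S < ∑ i, μ (A i) + μ S) :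
    μ (⋂ i, A i) ≠ 0 := by
  intro hzero
  have hS : μ S ≤ ∑ i, μ (S \ A i) := calc
    μ S ≤ μ (S \ ⋂ i, A i) + μ (⋂ i, A i) :=
      (measure_mono (subset_sdiff_union _ _)).trans (measure_union_le _ _)
    _ ≤ ∑ i, μ (S \ A i) := by
      rw [hzero, add_zero, sdiff_iInter]
      exact measure_iUnion_fintype_le μ _
  have hsplit (i : ι) : μ (A i) + μ (S \ A i) = μ S := by
    rw [← measure_inter_add_sdiff₀ S (hA i), inter_eq_right.mpr (hAS i)]
  refine h.not_ge ?_
  calc ∑ i, μ (A i) + μ S ≤ ∑ i, μ (A i) + ∑ i, μ (S \ A i) := by gcongr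
    _ = Fintype.card ι * μ S := by
      rw [← Finset.sum_add_distrib, Finset.sum_congr rfl fun i _ => hsplit i]
      simp

theorem Measure.exists_infinite_slice_of_prod_ne_zero {α β : Type*} [MeasurableSpace α]
    [MeasurableSpace β] {μ : Measure α} {ν : Measure β} [SFinite ν] [NullSingletonClass ν]
    {s : Set (α × β)} (hs : MeasurableSet s) (h : μ.prod ν s ≠ 0) :
    ∃ x, (Prod.mk x ⁻¹' s).Infinite := by
  by_contra! hfin
  exact h <| (Measure.measure_prod_null hs).mpr <|
    Filter.Eventually.of_forall fun x => (hfin x).measure_zero ν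

end MeasureTheory

theorem Ioc_zero_one_subset_iUnion_thirds :
    Ioc (0 : ℝ) 1 ⊆ ⋃ k : Fin 3, Ioc ((k : ℝ) / 3) ((k + 1) / 3) := by
  rintro x ⟨hx₀, hx₁⟩
  simp only [mem_iUnion, mem_Ioc, Fin.exists_fin_succ, Fin.exists_fin_zero]
  norm_num
  rcases le_or_gt x (1 / 3) with h₁ | h₁
  · left; constructor <;> linarith
  rcases le_or_gt x (2 / 3) with h₂ | h₂
  · right; left; constructor <;> linarith
  · right; right; constructor <;> linarith

def shiftedThird (M : Set (ℝ × ℝ)) (k : Fin 3) : Set (ℝ × ℝ) :=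
  Ioc 0 (1 / 3) ×ˢ Ioc 0 1 ∩ (· + ((k : ℝ) / 3, 0)) ⁻¹' M

theorem volume_le_sum_volume_shiftedThird {M : Set (ℝ × ℝ)}
    (hM : M ⊆ Ioc (0 : ℝ) 1 ×ˢ Ioc (0 : ℝ) 1) :
    volume M ≤ ∑ k, volume (shiftedThird M k) := by
  set strip : Fin 3 → Set (ℝ × ℝ) := fun k => Ioc ((k : ℝ) / 3) ((k + 1) / 3) ×ˢ Ioc 0 1
  have hcover : M ⊆ ⋃ k, M ∩ strip k := by
    rintro ⟨x, y⟩ hp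
    obtain ⟨hx, hy⟩ := hM hp
    obtain ⟨k, hk⟩ := mem_iUnion.1 (Ioc_zero_one_subset_iUnion_thirds hx)
    exact mem_iUnion.2 ⟨k, hp, hk, hy⟩
  have hstrip (k : Fin 3) :
      (· + ((k : ℝ) / 3, 0)) ⁻¹' strip k ⊆ Ioc 0 (1 / 3) ×ˢ Ioc 0 1 := by
    rintro ⟨x, y⟩ ⟨⟨hx₀, hx₁⟩, hy⟩
    simp only [Prod.fst_add, Prod.snd_add, add_zero] at hx₀ hx₁ hy
    exact ⟨⟨by linarith, by linarith⟩, hy⟩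
  calc volume M ≤ ∑ k, volume (M ∩ strip k) :=
        (measure_mono hcover).trans (measure_iUnion_fintype_le _ _)
    _ ≤ ∑ k, volume (shiftedThird M k) := by
      refine Finset.sum_le_sum fun k _ => ?_
      rw [← measure_preimage_add_right volume ((k : ℝ) / 3, 0), preimage_inter, inter_comm]
      exact measure_mono (inter_subset_inter_left _ (hstrip k))

theorem mem_of_mem_iInter_shiftedThird {M : Set (ℝ × ℝ)} {x y : ℝ}
    (hp : (x, y) ∈ ⋂ k, shiftedThird M k) :
    (x, y) ∈ M ∧ (x + 1 / 3, y) ∈ M ∧ (x + 2 / 3, y) ∈ M := by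
  have hk := fun k => (mem_iInter.1 hp k).2
  exact ⟨by simpa using hk 0, by simpa using hk 1, by simpa using hk 2⟩

theorem volume_Ioc_prod_Ioc_third : volume (Ioc (0 : ℝ) (1 / 3) ×ˢ Ioc (0 : ℝ) 1) = 3⁻¹ := by
  rw [Measure.volume_eq_prod, Measure.prod_prod]
  simp

theorem card_mul_volume_lt_sum_volume_shiftedThird {M : Set (ℝ × ℝ)}
    (hM : M ⊆ Ioc (0 : ℝ) 1 ×ˢ Ioc (0 : ℝ) 1) (hvol : (2 : ℝ≥0∞) / 3 < volume M) :
    Fintype.card (Fin 3) * volume (Ioc (0 : ℝ) (1 / 3) ×ˢ Ioc (0 : ℝ) 1) <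
      ∑ k, volume (shiftedThird M k) + volume (Ioc (0 : ℝ) (1 / 3) ×ˢ Ioc (0 : ℝ) 1) := by
  rw [volume_Ioc_prod_Ioc_third]
  calc Fintype.card (Fin 3) * (3 : ℝ≥0∞)⁻¹ = 2 / 3 + 3⁻¹ := by
        rw [Fintype.card_fin, Nat.cast_ofNat, ENNReal.mul_inv_cancel, div_eq_mul_inv,
          ← add_one_mul, two_add_one_eq_three, ENNReal.mul_inv_cancel] <;> norm_num
    _ < ∑ k, volume (shiftedThird M k) + 3⁻¹ := by
      gcongr
      · simp
      · exact hvol.trans_le (volume_le_sum_volume_shiftedThird hM)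

theorem stmt_8
    (M : Set (ℝ × ℝ)) (hMmeas : MeasurableSet M)
    (hMsub : M ⊆ Ioc (0 : ℝ) 1 ×ˢ Ioc (0 : ℝ) 1)
    (hMvol : (2 : ℝ≥0∞) / 3 < volume M) :
    ∃ x₁ x₂ x₃ y₁ y₂ y₃ : ℝ, x₁ < x₂ ∧ x₂ < x₃ ∧ y₁ < y₂ ∧ y₂ < y₃ ∧
      (x₁, y₁) ∈ M ∧ (x₁, y₂) ∈ M ∧ (x₁, y₃) ∈ M ∧
      (x₂, y₁) ∈ M ∧ (x₂, y₂) ∈ M ∧ (x₂, y₃) ∈ M ∧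
      (x₃, y₁) ∈ M ∧ (x₃, y₂) ∈ M ∧ (x₃, y₃) ∈ M := by
  have hmeas (k : Fin 3) : MeasurableSet (shiftedThird M k) :=
    (measurableSet_Ioc.prod measurableSet_Ioc).inter (hMmeas.preimage (measurable_add_const _))
  have hcommon : volume (⋂ k, shiftedThird M k) ≠ 0 :=
    measure_iInter_ne_zero_of_card_mul_lt (fun k => inter_subset_left)
      (fun k => (hmeas k).nullMeasurableSet)
      (card_mul_volume_lt_sum_volume_shiftedThird hMsub hMvol)
  rw [Measure.volume_eq_prod] at hcommon
  obtain ⟨x, hx⟩ := Measure.exists_infinite_slice_of_prod_ne_zero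
    (MeasurableSet.iInter hmeas) hcommon
  obtain ⟨y₁, h₁, y₂, h₂, y₃, h₃, hy₁₂, hy₂₃⟩ := hx.exists_lt_lt
  obtain ⟨h₁₁, h₂₁, h₃₁⟩ := mem_of_mem_iInter_shiftedThird h₁
  obtain ⟨h₁₂, h₂₂, h₃₂⟩ := mem_of_mem_iInter_shiftedThird h₂
  obtain ⟨h₁₃, h₂₃, h₃₃⟩ := mem_of_mem_iInter_shiftedThird h₃
  exact ⟨x, x + 1 / 3, x + 2 / 3, y₁, y₂, y₃, by linarith, by linarith, hy₁₂, hy₂₃,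
    h₁₁, h₁₂, h₁₃, h₂₁, h₂₂, h₂₃, h₃₁, h₃₂, h₃₃⟩
end

section
/- Let μ be a probability measure on ℝ² with continuous marginal cumulative distribution functions F_X and F_Y, joint cumulative distribution function F, support S, and d_τ(x,y) := F(x,y) − (F_X(x)+F_Y(y))/2. If the two-dimensional Lebesgue measure of S is positive, λ₂(S) > 0, then d_τ is not constant on S. -/
/-!
If `d_τ` were constant on `S`, then for `x₁ < x₃`, `y₁ < y₃` with the four corners `(xᵢ, yⱼ)` in
`S`, the mixed second difference of `d_τ` over the rectangle would vanish. The marginal terms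
cancel in that difference, which is therefore `μ((x₁, x₃] × (y₁, y₃])`; so the open rectangle is
`μ`-null and misses the support. But a set of positive planar measure contains a grid
`{x₁ < x₂ < x₃} × {y₁ < y₂ < y₃}`, whose centre lies in that open rectangle. The grid comes from
Fubini: the set of `(x, y) ∈ ℝ³ × ℝ` with every `(xᵢ, y) ∈ S` has measure `∫ λ(Sʸ)³ dy > 0`, so for
some `x` with distinct coordinates a set of `y` of positive measure, hence infinitely many, qualify.
-/

open MeasureTheory Set

section Rectangle

variable {α β : Type*} [LinearOrder α] [TopologicalSpace α] [OrderClosedTopology α]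
  [MeasurableSpace α] [OpensMeasurableSpace α]
  [LinearOrder β] [TopologicalSpace β] [OrderClosedTopology β]
  [MeasurableSpace β] [OpensMeasurableSpace β]
  (μ : Measure (α × β)) [IsFiniteMeasure μ]

theorem measureReal_Ioc_prod_Iic {a b : α} (hab : a ≤ b) (t : β) :
    μ.real (Ioc a b ×ˢ Iic t) = μ.real (Iic b ×ˢ Iic t) - μ.real (Iic a ×ˢ Iic t) := by
  have hsub : Iic a ×ˢ Iic t ⊆ Iic b ×ˢ Iic t := prod_mono (Iic_subset_Iic.2 hab) subset_rfl
  rw [← measureReal_sdiff hsub (measurableSet_Iic.prod measurableSet_Iic)]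
  congr 1
  ext ⟨u, v⟩
  simp only [mem_prod, mem_Ioc, mem_Iic, mem_sdiff, not_and, not_le]
  grind

theorem measureReal_Ioc_prod_Ioc_s10 {a b : α} {c d : β} (hab : a ≤ b) (hcd : c ≤ d) :
    μ.real (Ioc a b ×ˢ Ioc c d) = μ.real (Iic b ×ˢ Iic d) - μ.real (Iic a ×ˢ Iic d)
      - μ.real (Iic b ×ˢ Iic c) + μ.real (Iic a ×ˢ Iic c) := by
  have hsub : Ioc a b ×ˢ Iic c ⊆ Ioc a b ×ˢ Iic d := prod_mono subset_rfl (Iic_subset_Iic.2 hcd)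
  have hdiff : Ioc a b ×ˢ Ioc c d = Ioc a b ×ˢ Iic d \ Ioc a b ×ˢ Iic c := by
    ext ⟨u, v⟩
    simp only [mem_prod, mem_Ioc, mem_Iic, mem_sdiff, not_and, not_le]
    grind
  rw [hdiff, measureReal_sdiff hsub (measurableSet_Ioc.prod measurableSet_Iic),
    measureReal_Ioc_prod_Iic μ hab, measureReal_Ioc_prod_Iic μ hab]
  ring

end Rectangle

theorem Real.ae_injective {ι : Type*} [Fintype ι] :
    ∀ᵐ x : ι → ℝ, Function.Injective x := by
  have hdiag : ∀ i j, i ≠ j → ∀ᵐ x : ι → ℝ, x i ≠ x j := by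
    intro i j hij
    let D : Submodule ℝ (ι → ℝ) :=
      LinearMap.ker (LinearMap.proj (R := ℝ) (φ := fun _ : ι => ℝ) i - LinearMap.proj j)
    have hD : D ≠ ⊤ := by
      classical
      intro h
      have : Pi.single i (1 : ℝ) ∈ D := h ▸ Submodule.mem_top
      simp [D, hij.symm] at this
    refine measure_mono_null (fun x hx => ?_) (Measure.addHaar_submodule volume D hD)
    simpa [D, sub_eq_zero] using hx
  have hall : ∀ᵐ x : ι → ℝ, ∀ i j, i ≠ j → x i ≠ x j :=
    ae_all_iff.2 fun i => ae_all_iff.2 fun j => ae_all_iff.2 (hdiag i j)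
  filter_upwards [hall] with x hx i j
  exact not_imp_not.1 (hx i j)

theorem exists_injective_volume_setOf_forall_mem_pos {ι : Type*} [Fintype ι] {S : Set (ℝ × ℝ)}
    (hS : MeasurableSet S) (hvol : 0 < volume S) :
    ∃ x : ι → ℝ, Function.Injective x ∧ 0 < volume {y | ∀ i, (x i, y) ∈ S} := by
  set A : Set ((ι → ℝ) × ℝ) := {p | ∀ i, (p.1 i, p.2) ∈ S}
  have hA : MeasurableSet A := by
    simp only [A, ofPred_forall]
    exact MeasurableSet.iInter fun i => hS.preimage (by fun_prop)
  set f : ℝ → ENNReal := fun y => volume ((·, y) ⁻¹' S)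
  have hf : Measurable f := measurable_measure_prodMk_right hS
  have hA_eq : volume A = ∫⁻ y, f y ^ Fintype.card ι := by
    rw [Measure.volume_eq_prod, Measure.prod_apply_symm hA]
    refine lintegral_congr fun y => ?_
    rw [← Finset.card_univ, ← Finset.prod_const, ← volume_pi_pi]
    congr 1
    ext x
    simp [A]
  have hA_pos : 0 < volume A := by
    have hS_eq : volume S = ∫⁻ y, f y := by
      rw [Measure.volume_eq_prod, Measure.prod_apply_symm hS]
    rw [hS_eq, lintegral_pos_iff_support hf] at hvol
    rw [hA_eq, lintegral_pos_iff_support (hf.pow_const _)]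
    exact hvol.trans_le (measure_mono fun y hy => pow_ne_zero _ hy)
  rw [Measure.volume_eq_prod, Measure.prod_apply hA,
    lintegral_pos_iff_support (measurable_measure_prodMk_left hA)] at hA_pos
  have hfreq : ∃ᵐ x : ι → ℝ, x ∈ Function.support fun x => volume (Prod.mk x ⁻¹' A) :=
    frequently_ae_mem_iff.2 hA_pos.ne'
  obtain ⟨x, hx, hinj⟩ := (hfreq.and_eventually Real.ae_injective).exists
  exact ⟨x, hinj, pos_iff_ne_zero.2 hx⟩

theorem exists_strictMono_grid_subset {S : Set (ℝ × ℝ)} (hS : MeasurableSet S)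
    (hvol : 0 < volume S) (n : ℕ) :
    ∃ x y : Fin n → ℝ, StrictMono x ∧ StrictMono y ∧ ∀ i j, (x i, y j) ∈ S := by
  obtain ⟨x₀, hx₀, hT⟩ := exists_injective_volume_setOf_forall_mem_pos (ι := Fin n) hS hvol
  have hT_inf : {y | ∀ i, (x₀ i, y) ∈ S}.Infinite := fun hfin =>
    hT.ne' (hfin.measure_zero volume)
  obtain ⟨Y, hYT, hY⟩ := hT_inf.exists_subset_card_eq n
  have hX : (Finset.univ.image x₀).card = n := by
    rw [Finset.card_image_of_injective _ hx₀, Finset.card_fin]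
  refine ⟨_, _, (Finset.orderEmbOfFin _ hX).strictMono, (Y.orderEmbOfFin hY).strictMono,
    fun i j => ?_⟩
  obtain ⟨k, -, hk⟩ := Finset.mem_image.1 (Finset.orderEmbOfFin_mem _ hX i)
  rw [← hk]
  exact hYT (Y.orderEmbOfFin_mem hY j) k

theorem stmt_10_general
    (μ : Measure (ℝ × ℝ)) [IsProbabilityMeasure μ]
    (F : ℝ → ℝ → ℝ) (FX FY : ℝ → ℝ) (dτ : ℝ × ℝ → ℝ)
    (hF : ∀ x y, F x y = (μ (Iic x ×ˢ Iic y)).toReal)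
    (hdτ : ∀ p : ℝ × ℝ, dτ p = F p.1 p.2 - (FX p.1 + FY p.2) / 2)
    (S : Set (ℝ × ℝ))
    (hSclosed : IsClosed S)
    (hSmin : ∀ T : Set (ℝ × ℝ), IsClosed T → μ Tᶜ = 0 → S ⊆ T)
    (hSvol : 0 < volume S) :
    ∃ p ∈ S, ∃ q ∈ S, dτ p ≠ dτ q := by
  by_contra! hconst
  obtain ⟨x, y, hx, hy, hxy⟩ := exists_strictMono_grid_subset hSclosed.measurableSet hSvol 3
  have hrect : μ.real (Ioc (x 0) (x 2) ×ˢ Ioc (y 0) (y 2)) = 0 := by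
    have h₀ := hconst _ (hxy 0 0) _ (hxy 2 0)
    have h₂ := hconst _ (hxy 0 2) _ (hxy 2 2)
    simp only [hdτ, hF, ← measureReal_def] at h₀ h₂
    rw [measureReal_Ioc_prod_Ioc_s10 μ (hx.monotone (by decide)) (hy.monotone (by decide))]
    linarith
  set U := Ioo (x 0) (x 2) ×ˢ Ioo (y 0) (y 2)
  have hU : μ U = 0 :=
    measure_mono_null (prod_mono Ioo_subset_Ioc_self Ioo_subset_Ioc_self)
      ((measureReal_eq_zero_iff).1 hrect)
  have hSU : S ⊆ Uᶜ :=
    hSmin _ (isOpen_Ioo.prod isOpen_Ioo).isClosed_compl (by rwa [compl_compl])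
  exact hSU (hxy 1 1) ⟨⟨hx (by decide), hx (by decide)⟩, hy (by decide), hy (by decide)⟩

theorem stmt_10
    (μ : Measure (ℝ × ℝ)) [IsProbabilityMeasure μ]
    (F : ℝ → ℝ → ℝ) (FX FY : ℝ → ℝ) (dτ : ℝ × ℝ → ℝ)
    (hF : ∀ x y, F x y = (μ (Iic x ×ˢ Iic y)).toReal)
    (hFX : ∀ x, FX x = (μ (Iic x ×ˢ (univ : Set ℝ))).toReal)
    (hFY : ∀ y, FY y = (μ ((univ : Set ℝ) ×ˢ Iic y)).toReal)
    (hFXcont : Continuous FX) (hFYcont : Continuous FY)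
    (hdτ : ∀ p : ℝ × ℝ, dτ p = F p.1 p.2 - (FX p.1 + FY p.2) / 2)
    (S : Set (ℝ × ℝ))
    (hSclosed : IsClosed S) (hSfull : μ Sᶜ = 0)
    (hSmin : ∀ T : Set (ℝ × ℝ), IsClosed T → μ Tᶜ = 0 → S ⊆ T)
    (hSvol : 0 < volume S) :
    ∃ p ∈ S, ∃ q ∈ S, dτ p ≠ dτ q :=
  stmt_10_general μ F FX FY dτ hF hdτ S hSclosed hSmin hSvol
end

section
/- Let μ be a probability measure on ℝ² with continuous marginal cumulative distribution functions F_X and F_Y, joint cumulative distribution function F, support S, and d_τ(x,y) := F(x,y) − (F_X(x)+F_Y(y))/2. If the absolutely continuous component of μ with respect to two-dimensional Lebesgue measure λ₂ is nonzero, then d_τ is not constant on S. -/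
/-!
If `dτ` were constant on `S`, then, since the marginal terms of `dτ` cancel in the mixed
difference over a rectangle, every rectangle `(x₁, x₂] × (y₁, y₂]` with its four corners in `S`
would be `μ`-null. On the other hand `μac ≠ 0` forces `S` to have positive Lebesgue measure, and
near a Lebesgue density point of `S` a Fubini argument produces such a rectangle whose interior
contains a point of `S`; as `S` is the support of `μ`, that open rectangle has positive measure.
-/

open MeasureTheory Set Metric
open scoped ENNReal

theorem measure_ne_zero_of_absolutelyContinuous {α : Type*} [MeasurableSpace α]
    {μ ν : Measure α} {s : Set α} (hμν : μ ≪ ν) (hμ : μ ≠ 0) (hs : μ sᶜ = 0) : ν s ≠ 0 := by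
  intro hνs
  apply hμ
  rw [← Measure.measure_univ_eq_zero, ← union_compl_self s]
  exact measure_union_null (hμν hνs) hs

theorem exists_closedBall_measure_diff_lt {β : Type*} [MetricSpace β] [MeasurableSpace β]
    [BorelSpace β] [HasBesicovitchCovering β] [ProperSpace β]
    (μ : Measure β) [IsLocallyFiniteMeasure μ] [μ.IsOpenPosMeasure] {s : Set β}
    (hs : MeasurableSet s) (hμs : μ s ≠ 0) {ε : ℝ≥0∞} (hε : 0 < ε) :
    ∃ x, ∃ r > 0, μ (closedBall x r \ s) < ε * μ (closedBall x r) := by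
  have : (ae (μ.restrict s)).NeBot := ae_restrict_neBot.2 hμs
  obtain ⟨x, hxs, hx⟩ := ((ae_restrict_mem hs).and (ae_restrict_of_ae
    (Besicovitch.ae_tendsto_measure_inter_div_of_measurableSet μ hs.compl))).exists
  rw [indicator_of_notMem (not_not_intro hxs)] at hx
  obtain ⟨r, hr, hr0⟩ := ((hx.eventually (gt_mem_nhds hε)).and self_mem_nhdsWithin).exists
  refine ⟨x, r, hr0, ?_⟩
  rw [sdiff_eq, inter_comm]
  exact (ENNReal.div_lt_iff (Or.inl (measure_closedBall_pos μ x hr0).ne')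
    (Or.inl measure_closedBall_lt_top.ne)).1 hr

theorem exists_mem_volume_prodMk_preimage_lt {α β : Type*} [MeasurableSpace α]
    [MeasurableSpace β] {μ : Measure α} {ν : Measure β} [SFinite ν] {B : Set (α × β)}
    (hB : MeasurableSet B) {I : Set α} {t : ℝ≥0∞} (h : μ.prod ν B < t * μ I) :
    ∃ x ∈ I, ν (Prod.mk x ⁻¹' B) < t := by
  by_contra! hI
  refine h.not_ge ?_
  calc t * μ I = ∫⁻ _ in I, t ∂μ := (setLIntegral_const I t).symm
    _ ≤ ∫⁻ x in I, ν (Prod.mk x ⁻¹' B) ∂μ :=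
        setLIntegral_mono (measurable_measure_prodMk_left hB) hI
    _ ≤ ∫⁻ x, ν (Prod.mk x ⁻¹' B) ∂μ := setLIntegral_le_lintegral I _
    _ = μ.prod ν B := (Measure.prod_apply hB).symm

theorem nonempty_diff_of_measure_lt {α : Type*} [MeasurableSpace α] {μ : Measure α}
    {s t : Set α} (h : μ t < μ s) : (s \ t).Nonempty :=
  sdiff_nonempty.2 fun hst => (measure_mono hst).not_gt h

theorem exists_rectangle_corners_mem {S : Set (ℝ × ℝ)} (hS : MeasurableSet S) {x₀ y₀ r : ℝ}
    (hr : 0 < r) (hQS : volume (Icc (x₀ - r) (x₀ + r) ×ˢ Icc (y₀ - r) (y₀ + r) \ S) <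
      ENNReal.ofReal (r ^ 2 / 5)) :
    ∃ x₁ x₂ y₁ y₂, x₁ ≤ x₂ ∧ y₁ ≤ y₂ ∧ (x₁, y₁) ∈ S ∧ (x₁, y₂) ∈ S ∧ (x₂, y₁) ∈ S ∧
      (x₂, y₂) ∈ S ∧ (Ioo x₁ x₂ ×ˢ Ioo y₁ y₂ ∩ S).Nonempty := by
  set Q := Icc (x₀ - r) (x₀ + r) ×ˢ Icc (y₀ - r) (y₀ + r)
  have mem_S : ∀ p ∈ Q, p ∉ Q \ S → p ∈ S := fun p hpQ hpB =>
    not_not.1 fun hpS => hpB ⟨hpQ, hpS⟩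
  have volume_third (a : ℝ) : volume (Icc a (a + 2 * r / 3)) = ENNReal.ofReal (2 * r / 3) := by
    rw [Real.volume_Icc, add_sub_cancel_left]
  -- Split `Q` into thirds. As `r ^ 2 / 5 < (r / 3) * (2 * r / 3)`, each outer third of the
  -- `x`-range has a vertical section of `Q \ S` shorter than `r / 3`; two such sections cannot
  -- cover an outer third of the `y`-range; and `Q \ S` cannot contain the middle ninth.
  have pick_x (a : ℝ) : ∃ x ∈ Icc a (a + 2 * r / 3),
      volume (Prod.mk x ⁻¹' (Q \ S)) < ENNReal.ofReal (r / 3) := by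
    refine exists_mem_volume_prodMk_preimage_lt (μ := volume)
      ((measurableSet_Icc.prod measurableSet_Icc).diff hS) ?_
    rw [volume_third, ← ENNReal.ofReal_mul (by positivity), ← Measure.volume_eq_prod]
    exact hQS.trans_le (ENNReal.ofReal_le_ofReal (by nlinarith))
  obtain ⟨x₁, ⟨hx₁l, hx₁r⟩, hx₁⟩ := pick_x (x₀ - r)
  obtain ⟨x₂, ⟨hx₂l, hx₂r⟩, hx₂⟩ := pick_x (x₀ + r / 3)
  have pick_y (b : ℝ) : ∃ y ∈ Icc b (b + 2 * r / 3),
      y ∉ Prod.mk x₁ ⁻¹' (Q \ S) ∪ Prod.mk x₂ ⁻¹' (Q \ S) := by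
    refine nonempty_diff_of_measure_lt (μ := volume) ((measure_union_le _ _).trans_lt ?_)
    calc _ < ENNReal.ofReal (r / 3) + ENNReal.ofReal (r / 3) := ENNReal.add_lt_add hx₁ hx₂
      _ = _ := by rw [volume_third, ← ENNReal.ofReal_add (by positivity) (by positivity)]; ring_nf
  obtain ⟨y₁, ⟨hy₁l, hy₁r⟩, hy₁⟩ := pick_y (y₀ - r)
  obtain ⟨y₂, ⟨hy₂l, hy₂r⟩, hy₂⟩ := pick_y (y₀ + r / 3)
  obtain ⟨hx₁y₁, hx₂y₁⟩ := not_or.1 hy₁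
  obtain ⟨hx₁y₂, hx₂y₂⟩ := not_or.1 hy₂
  have middle : volume (Q \ S) <
      volume (Ioo (x₀ - r / 3) (x₀ + r / 3) ×ˢ Ioo (y₀ - r / 3) (y₀ + r / 3)) := by
    rw [Measure.volume_eq_prod, Measure.prod_prod, Real.volume_Ioo, Real.volume_Ioo,
      ← ENNReal.ofReal_mul (by linarith), ← Measure.volume_eq_prod]
    exact hQS.trans_le (ENNReal.ofReal_le_ofReal (by nlinarith))
  obtain ⟨⟨a, b⟩, ⟨ha, hb⟩, hab⟩ := nonempty_diff_of_measure_lt middle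
  refine ⟨x₁, x₂, y₁, y₂, by linarith, by linarith, mem_S _ ?_ hx₁y₁, mem_S _ ?_ hx₁y₂,
    mem_S _ ?_ hx₂y₁, mem_S _ ?_ hx₂y₂,
    ⟨(a, b), ⟨⟨?_, ?_⟩, ⟨?_, ?_⟩⟩, mem_S _ ⟨⟨?_, ?_⟩, ?_, ?_⟩ hab⟩⟩
  all_goals first
    | exact ⟨⟨by linarith, by linarith⟩, ⟨by linarith, by linarith⟩⟩
    | linarith [ha.1, ha.2, hb.1, hb.2]

theorem measureReal_Ioc_prod_Ioc_s12 (μ : Measure (ℝ × ℝ)) [IsFiniteMeasure μ] {x₁ x₂ y₁ y₂ : ℝ}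
    (hx : x₁ ≤ x₂) (hy : y₁ ≤ y₂) :
    μ.real (Ioc x₁ x₂ ×ˢ Ioc y₁ y₂) = μ.real (Iic x₂ ×ˢ Iic y₂) - μ.real (Iic x₁ ×ˢ Iic y₂)
      - μ.real (Iic x₂ ×ˢ Iic y₁) + μ.real (Iic x₁ ×ˢ Iic y₁) := by
  have split_x : ∀ t : Set ℝ, MeasurableSet t →
      μ.real (Iic x₂ ×ˢ t) = μ.real (Iic x₁ ×ˢ t) + μ.real (Ioc x₁ x₂ ×ˢ t) := fun t ht => by
    rw [← Iic_union_Ioc_eq_Iic hx, union_prod, measureReal_union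
      ((Iic_disjoint_Ioc le_rfl).set_prod_left _ _) (measurableSet_Ioc.prod ht)]
  have split_y : μ.real (Ioc x₁ x₂ ×ˢ Iic y₂) =
      μ.real (Ioc x₁ x₂ ×ˢ Iic y₁) + μ.real (Ioc x₁ x₂ ×ˢ Ioc y₁ y₂) := by
    rw [← Iic_union_Ioc_eq_Iic hy, prod_union, measureReal_union
      ((Iic_disjoint_Ioc le_rfl).set_prod_right _ _) (measurableSet_Ioc.prod measurableSet_Ioc)]
  linarith [split_x (Iic y₂) measurableSet_Iic, split_x (Iic y₁) measurableSet_Iic]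

theorem measure_Ioc_prod_Ioc_eq_zero_of_corners (μ : Measure (ℝ × ℝ)) [IsFiniteMeasure μ]
    {d : ℝ × ℝ → ℝ} {f g : ℝ → ℝ}
    (hd : ∀ p : ℝ × ℝ, d p = μ.real (Iic p.1 ×ˢ Iic p.2) + f p.1 + g p.2)
    {x₁ x₂ y₁ y₂ : ℝ} (hx : x₁ ≤ x₂) (hy : y₁ ≤ y₂) (h₁₂ : d (x₁, y₂) = d (x₁, y₁))
    (h₂₁ : d (x₂, y₁) = d (x₁, y₁)) (h₂₂ : d (x₂, y₂) = d (x₁, y₁)) :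
    μ (Ioc x₁ x₂ ×ˢ Ioc y₁ y₂) = 0 := by
  rw [← measureReal_eq_zero_iff, measureReal_Ioc_prod_Ioc_s12 μ hx hy]
  simp only [hd] at h₁₂ h₂₁ h₂₂
  linarith

theorem exists_rectangle_corners_mem_of_volume_ne_zero {S : Set (ℝ × ℝ)} (hS : MeasurableSet S)
    (hvol : volume S ≠ 0) :
    ∃ x₁ x₂ y₁ y₂, x₁ ≤ x₂ ∧ y₁ ≤ y₂ ∧ (x₁, y₁) ∈ S ∧ (x₁, y₂) ∈ S ∧ (x₂, y₁) ∈ S ∧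
      (x₂, y₂) ∈ S ∧ (Ioo x₁ x₂ ×ˢ Ioo y₁ y₂ ∩ S).Nonempty := by
  obtain ⟨⟨x₀, y₀⟩, r, hr, hdiff⟩ :=
    exists_closedBall_measure_diff_lt volume hS hvol (ε := ENNReal.ofReal 20⁻¹) (by norm_num)
  rw [← closedBall_prod_same, Real.closedBall_eq_Icc, Real.closedBall_eq_Icc] at hdiff
  refine exists_rectangle_corners_mem hS hr (hdiff.trans_eq ?_)
  rw [Measure.volume_eq_prod, Measure.prod_prod, Real.volume_Icc, Real.volume_Icc,
    ← ENNReal.ofReal_mul (by linarith), ← ENNReal.ofReal_mul (by norm_num)]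
  ring_nf

theorem stmt_12_general
    (μ : Measure (ℝ × ℝ)) [IsProbabilityMeasure μ]
    (F : ℝ → ℝ → ℝ) (FX FY : ℝ → ℝ) (dτ : ℝ × ℝ → ℝ)
    (hF : ∀ x y, F x y = (μ (Iic x ×ˢ Iic y)).toReal)
    (hdτ : ∀ p : ℝ × ℝ, dτ p = F p.1 p.2 - (FX p.1 + FY p.2) / 2)
    (S : Set (ℝ × ℝ))
    (hSclosed : IsClosed S) (hSfull : μ Sᶜ = 0)
    (hSmin : ∀ T : Set (ℝ × ℝ), IsClosed T → μ Tᶜ = 0 → S ⊆ T)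
    (μac μsing : Measure (ℝ × ℝ))
    (hdecomp : μ = μac + μsing)
    (hac : μac ≪ (volume : Measure (ℝ × ℝ)))
    (hne : μac ≠ 0) :
    ∃ p ∈ S, ∃ q ∈ S, dτ p ≠ dτ q := by
  by_contra! hconst
  have hμac : μac ≪ μ := hdecomp ▸ Measure.AbsolutelyContinuous.rfl.add_right μsing
  have hvol : volume S ≠ 0 := measure_ne_zero_of_absolutelyContinuous hac hne (hμac hSfull)
  obtain ⟨x₁, x₂, y₁, y₂, hx, hy, h₁₁, h₁₂, h₂₁, h₂₂, q, hq, hqS⟩ :=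
    exists_rectangle_corners_mem_of_volume_ne_zero hSclosed.measurableSet hvol
  have hd (p : ℝ × ℝ) : dτ p = μ.real (Iic p.1 ×ˢ Iic p.2) + (-FX p.1 / 2) + (-FY p.2 / 2) := by
    rw [hdτ, hF, measureReal_def]; ring
  have hzero : μ (Ioc x₁ x₂ ×ˢ Ioc y₁ y₂) = 0 :=
    measure_Ioc_prod_Ioc_eq_zero_of_corners μ (f := fun x => -FX x / 2) (g := fun y => -FY y / 2)
      hd hx hy (hconst _ h₁₂ _ h₁₁) (hconst _ h₂₁ _ h₁₁) (hconst _ h₂₂ _ h₁₁)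
  have hsupp : S ⊆ μ.support := hSmin _ Measure.isClosed_support Measure.measure_compl_support
  have hpos : 0 < μ (Ioo x₁ x₂ ×ˢ Ioo y₁ y₂) :=
    (Measure.mem_support_iff_forall q).1 (hsupp hqS) _ ((isOpen_Ioo.prod isOpen_Ioo).mem_nhds hq)
  exact hpos.ne' (measure_mono_null (prod_mono Ioo_subset_Ioc_self Ioo_subset_Ioc_self) hzero)

theorem stmt_12
    (μ : Measure (ℝ × ℝ)) [IsProbabilityMeasure μ]
    (F : ℝ → ℝ → ℝ) (FX FY : ℝ → ℝ) (dτ : ℝ × ℝ → ℝ)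
    (hF : ∀ x y, F x y = (μ (Iic x ×ˢ Iic y)).toReal)
    (hFX : ∀ x, FX x = (μ (Iic x ×ˢ (univ : Set ℝ))).toReal)
    (hFY : ∀ y, FY y = (μ ((univ : Set ℝ) ×ˢ Iic y)).toReal)
    (hFXcont : Continuous FX) (hFYcont : Continuous FY)
    (hdτ : ∀ p : ℝ × ℝ, dτ p = F p.1 p.2 - (FX p.1 + FY p.2) / 2)
    (S : Set (ℝ × ℝ))
    (hSclosed : IsClosed S) (hSfull : μ Sᶜ = 0)
    (hSmin : ∀ T : Set (ℝ × ℝ), IsClosed T → μ Tᶜ = 0 → S ⊆ T)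
    (μac μsing : Measure (ℝ × ℝ))
    (hdecomp : μ = μac + μsing)
    (hac : μac ≪ (volume : Measure (ℝ × ℝ)))
    (hsing : μsing ⟂ₘ (volume : Measure (ℝ × ℝ)))
    (hne : μac ≠ 0) :
    ∃ p ∈ S, ∃ q ∈ S, dτ p ≠ dτ q :=
  stmt_12_general μ F FX FY dτ hF hdτ S hSclosed hSfull hSmin μac μsing hdecomp hac hne
end

section
/- Let μ be a probability measure on ℝ² with continuous marginal cumulative distribution functions F_X and F_Y and support S, and let μ_X and μ_Y denote the two marginal distributions of μ. Suppose there exist real numbers x₁ < x* < x₂ and y₁ < y* < y₂ such that the five points (x₁,y₁), (x₁,y₂), (x₂,y₁), (x₂,y₂), (x*,y*) all lie in S. Then there do not exist functions f : ℝ → ℝ and g : ℝ → ℝ and a constant c such that F_X(x)·F_Y(y) − f(x) − g(y) = c for all (x,y) ∈ S; that is, no function of the form d_ρ(x,y) = F_X(x)F_Y(y) − f(x) − g(y) is constant on S. -/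
/-!
If `F_X(x) F_Y(y) - f(x) - g(y)` took the same value at the four corners of the rectangle
`[x₁, x₂] × [y₁, y₂]`, the alternating sum over the corners would give
`(F_X x₂ - F_X x₁) (F_Y y₂ - F_Y y₁) = 0`. But the open strips `(x₁, x₂) × ℝ` and `ℝ × (y₁, y₂)`
are neighbourhoods of the support point `(x*, y*)`, so they carry positive mass, and both
marginal distribution functions increase strictly across them.
-/

open MeasureTheory Set

lemma measure_pos_of_mem_of_isOpen {X : Type*} [TopologicalSpace X] [MeasurableSpace X]
    {μ : Measure X} {S : Set X} (hSmin : ∀ T : Set X, IsClosed T → μ Tᶜ = 0 → S ⊆ T)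
    {U : Set X} (hU : IsOpen U) {p : X} (hpS : p ∈ S) (hpU : p ∈ U) : 0 < μ U :=
  pos_iff_ne_zero.2 fun hμU ↦
    hSmin Uᶜ hU.isClosed_compl (by rwa [compl_compl]) hpS hpU

lemma toReal_measure_Iic_lt_of_measure_Ioo_pos {ν : Measure ℝ} [IsFiniteMeasure ν] {a b : ℝ}
    (h : 0 < ν (Ioo a b)) : (ν (Iic a)).toReal < (ν (Iic b)).toReal := by
  have hab : a ≤ b := (nonempty_Ioo.1 (nonempty_of_measure_ne_zero h.ne')).le
  have hsplit : ν (Iic b) = ν (Iic a) + ν (Ioc a b) := by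
    rw [← measure_union (Iic_disjoint_Ioc le_rfl) measurableSet_Ioc, Iic_union_Ioc_eq_Iic hab]
  have hIoc : ν (Ioc a b) ≠ 0 := (h.trans_le (measure_mono Ioo_subset_Ioc_self)).ne'
  exact ENNReal.toReal_strict_mono (measure_ne_top ν _)
    (hsplit ▸ ENNReal.lt_add_right (measure_ne_top ν _) hIoc)

theorem stmt_14_general
    (μ : Measure (ℝ × ℝ)) [IsProbabilityMeasure μ]
    (FX FY : ℝ → ℝ)
    (hFX : ∀ x, FX x = (μ (Iic x ×ˢ (univ : Set ℝ))).toReal)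
    (hFY : ∀ y, FY y = (μ ((univ : Set ℝ) ×ˢ Iic y)).toReal)
    (S : Set (ℝ × ℝ))
    (hSmin : ∀ T : Set (ℝ × ℝ), IsClosed T → μ Tᶜ = 0 → S ⊆ T)
    (x₁ xs x₂ y₁ ys y₂ : ℝ)
    (hx1 : x₁ < xs) (hx2 : xs < x₂) (hy1 : y₁ < ys) (hy2 : ys < y₂)
    (h11 : (x₁, y₁) ∈ S) (h12 : (x₁, y₂) ∈ S)
    (h21 : (x₂, y₁) ∈ S) (h22 : (x₂, y₂) ∈ S)
    (hss : (xs, ys) ∈ S) :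
    ¬ ∃ (f g : ℝ → ℝ) (c : ℝ), ∀ p ∈ S, FX p.1 * FY p.2 - f p.1 - g p.2 = c := by
  rintro ⟨f, g, c, h⟩
  have hcorners : (FX x₂ - FX x₁) * (FY y₂ - FY y₁) = 0 := by
    linear_combination h _ h22 - h _ h21 - h _ h12 + h _ h11
  have hFX_lt : FX x₁ < FX x₂ := by
    have hpos := measure_pos_of_mem_of_isOpen hSmin (isOpen_Ioo.preimage continuous_fst)
      hss ⟨hx1, hx2⟩
    rw [← Measure.fst_apply measurableSet_Ioo] at hpos
    simpa only [hFX, prod_univ, ← Measure.fst_apply measurableSet_Iic] using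
      toReal_measure_Iic_lt_of_measure_Ioo_pos hpos
  have hFY_lt : FY y₁ < FY y₂ := by
    have hpos := measure_pos_of_mem_of_isOpen hSmin (isOpen_Ioo.preimage continuous_snd)
      hss ⟨hy1, hy2⟩
    rw [← Measure.snd_apply measurableSet_Ioo] at hpos
    simpa only [hFY, univ_prod, ← Measure.snd_apply measurableSet_Iic] using
      toReal_measure_Iic_lt_of_measure_Ioo_pos hpos
  exact (mul_pos (sub_pos.2 hFX_lt) (sub_pos.2 hFY_lt)).ne' hcorners

theorem stmt_14
    (μ : Measure (ℝ × ℝ)) [IsProbabilityMeasure μ]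
    (FX FY : ℝ → ℝ)
    (hFX : ∀ x, FX x = (μ (Iic x ×ˢ (univ : Set ℝ))).toReal)
    (hFY : ∀ y, FY y = (μ ((univ : Set ℝ) ×ˢ Iic y)).toReal)
    (hFXcont : Continuous FX) (hFYcont : Continuous FY)
    (S : Set (ℝ × ℝ))
    (hSclosed : IsClosed S) (hSfull : μ Sᶜ = 0)
    (hSmin : ∀ T : Set (ℝ × ℝ), IsClosed T → μ Tᶜ = 0 → S ⊆ T)
    (x₁ xs x₂ y₁ ys y₂ : ℝ)
    (hx1 : x₁ < xs) (hx2 : xs < x₂) (hy1 : y₁ < ys) (hy2 : ys < y₂)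
    (h11 : (x₁, y₁) ∈ S) (h12 : (x₁, y₂) ∈ S)
    (h21 : (x₂, y₁) ∈ S) (h22 : (x₂, y₂) ∈ S)
    (hss : (xs, ys) ∈ S) :
    ¬ ∃ (f g : ℝ → ℝ) (c : ℝ), ∀ p ∈ S, FX p.1 * FY p.2 - f p.1 - g p.2 = c :=
  stmt_14_general μ FX FY hFX hFY S hSmin x₁ xs x₂ y₁ ys y₂ hx1 hx2 hy1 hy2 h11 h12 h21 h22 hss
end

section
/- Let μ be a probability measure on ℝ² with continuous marginal cumulative distribution functions F_X and F_Y and support S. If the topological interior of S is nonempty, then there do not exist functions f : ℝ → ℝ and g : ℝ → ℝ and a constant c such that F_X(x)·F_Y(y) − f(x) − g(y) = c for all (x,y) ∈ S. -/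
/-!
An interior point `p` of the support gives a square
`[p₁ - s, p₁ + s] × [p₂ - s, p₂ + s] ⊆ S`. The open square has positive mass, so both
marginals increase strictly across it: `F_X(p₁ + s) > F_X(p₁ - s)` and
`F_Y(p₂ + s) > F_Y(p₂ - s)`. On the other hand, if `F_X F_Y - f - g` is constant on the four
corners, its mixed second difference `(F_X(p₁ + s) - F_X(p₁ - s)) (F_Y(p₂ + s) - F_Y(p₂ - s))`
vanishes, since `f` and `g` cancel in it.
-/

open MeasureTheory Set Metric

theorem sub_mul_sub_eq_zero_of_forall_mem_pair {α β R : Type*} [CommRing R]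
    {F f : α → R} {G g : β → R} {c : R} {x₁ x₂ : α} {y₁ y₂ : β}
    (h : ∀ x ∈ ({x₁, x₂} : Set α), ∀ y ∈ ({y₁, y₂} : Set β),
      F x * G y - f x - g y = c) :
    (F x₂ - F x₁) * (G y₂ - G y₁) = 0 := by
  have h₁₁ := h x₁ (by simp) y₁ (by simp)
  have h₁₂ := h x₁ (by simp) y₂ (by simp)
  have h₂₁ := h x₂ (by simp) y₁ (by simp)
  have h₂₂ := h x₂ (by simp) y₂ (by simp)
  linear_combination h₂₂ - h₂₁ - h₁₂ + h₁₁

theorem measure_pos_of_isOpen_of_inter_nonempty {X : Type*} [TopologicalSpace X]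
    [MeasurableSpace X] {μ : Measure X} {S U : Set X}
    (hS : IsClosed S) (hSfull : μ Sᶜ = 0)
    (hSmin : ∀ T : Set X, IsClosed T → μ Tᶜ = 0 → S ⊆ T)
    (hU : IsOpen U) (hSU : (S ∩ U).Nonempty) : 0 < μ U := by
  refine pos_iff_ne_zero.2 fun hU0 => ?_
  have hnull : μ (S \ U)ᶜ = 0 := by
    rw [Set.compl_sdiff]
    exact measure_union_null hU0 hSfull
  obtain ⟨x, hxS, hxU⟩ := hSU
  exact (hSmin _ (hS.sdiff hU) hnull hxS).2 hxU

theorem measureReal_lt_measureReal_of_subset {α : Type*} [MeasurableSpace α]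
    {μ : Measure α} [IsFiniteMeasure μ] {s t : Set α}
    (hst : s ⊆ t) (hs : MeasurableSet s) (hpos : 0 < μ (t \ s)) : μ.real s < μ.real t := by
  have hdiff := measureReal_sdiff (μ := μ) hst hs
  have hdiff_pos : 0 < μ.real (t \ s) := ENNReal.toReal_pos hpos.ne' (measure_ne_top _ _)
  linarith

theorem pair_subset_closedBall (a : ℝ) {s : ℝ} (hs : 0 ≤ s) :
    ({a - s, a + s} : Set ℝ) ⊆ closedBall a s := by
  rw [Real.closedBall_eq_Icc]
  rintro x (rfl | rfl) <;> constructor <;> linarith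

theorem ball_subset_Iic_prod_univ_sdiff (p : ℝ × ℝ) (s : ℝ) :
    ball p s ⊆ (Iic (p.1 + s) ×ˢ univ) \ (Iic (p.1 - s) ×ˢ univ) := by
  intro q hq
  rw [← ball_prod_same, mem_prod, Real.ball_eq_Ioo, Real.ball_eq_Ioo] at hq
  simp only [mem_sdiff, mem_prod, mem_Iic, mem_univ, and_true, not_le]
  constructor <;> linarith [hq.1.1, hq.1.2]

theorem ball_subset_univ_prod_Iic_sdiff (p : ℝ × ℝ) (s : ℝ) :
    ball p s ⊆ (univ ×ˢ Iic (p.2 + s)) \ (univ ×ˢ Iic (p.2 - s)) := by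
  intro q hq
  rw [← ball_prod_same, mem_prod, Real.ball_eq_Ioo, Real.ball_eq_Ioo] at hq
  simp only [mem_sdiff, mem_prod, mem_Iic, mem_univ, true_and, not_le]
  constructor <;> linarith [hq.2.1, hq.2.2]

theorem stmt_15_general
    (μ : Measure (ℝ × ℝ)) [IsProbabilityMeasure μ]
    (FX FY : ℝ → ℝ)
    (hFX : ∀ x, FX x = (μ (Iic x ×ˢ (univ : Set ℝ))).toReal)
    (hFY : ∀ y, FY y = (μ ((univ : Set ℝ) ×ˢ Iic y)).toReal)
    (S : Set (ℝ × ℝ))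
    (hSclosed : IsClosed S) (hSfull : μ Sᶜ = 0)
    (hSmin : ∀ T : Set (ℝ × ℝ), IsClosed T → μ Tᶜ = 0 → S ⊆ T)
    (hint : (interior S).Nonempty) :
    ¬ ∃ (f g : ℝ → ℝ) (c : ℝ), ∀ p ∈ S, FX p.1 * FY p.2 - f p.1 - g p.2 = c := by
  rintro ⟨f, g, c, hconst⟩
  obtain ⟨p, hp⟩ := hint
  obtain ⟨r, hr, hball⟩ := isOpen_iff.mp isOpen_interior p hp
  set s := r / 2
  have hs : 0 < s := by positivity
  have hsr : s < r := half_lt_self hr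
  have hpos : 0 < μ (ball p s) :=
    measure_pos_of_isOpen_of_inter_nonempty hSclosed hSfull hSmin isOpen_ball
      ⟨p, interior_subset hp, mem_ball_self hs⟩
  have hX : FX (p.1 - s) < FX (p.1 + s) := by
    rw [hFX, hFX]
    exact measureReal_lt_measureReal_of_subset
      (prod_mono (Iic_subset_Iic.2 (by linarith)) le_rfl) (measurableSet_Iic.prod .univ)
      (hpos.trans_le (measure_mono (ball_subset_Iic_prod_univ_sdiff p s)))
  have hY : FY (p.2 - s) < FY (p.2 + s) := by
    rw [hFY, hFY]
    exact measureReal_lt_measureReal_of_subset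
      (prod_mono le_rfl (Iic_subset_Iic.2 (by linarith)))
      (MeasurableSet.univ.prod measurableSet_Iic)
      (hpos.trans_le (measure_mono (ball_subset_univ_prod_Iic_sdiff p s)))
  have hcorners : ∀ x ∈ ({p.1 - s, p.1 + s} : Set ℝ), ∀ y ∈ ({p.2 - s, p.2 + s} : Set ℝ),
      FX x * FY y - f x - g y = c := fun x hx y hy => hconst (x, y) <| by
    refine (hball.trans interior_subset) (closedBall_subset_ball hsr ?_)
    rw [← closedBall_prod_same]
    exact ⟨pair_subset_closedBall _ hs.le hx, pair_subset_closedBall _ hs.le hy⟩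
  exact (mul_pos (sub_pos.2 hX) (sub_pos.2 hY)).ne'
    (sub_mul_sub_eq_zero_of_forall_mem_pair hcorners)

theorem stmt_15
    (μ : Measure (ℝ × ℝ)) [IsProbabilityMeasure μ]
    (FX FY : ℝ → ℝ)
    (hFX : ∀ x, FX x = (μ (Iic x ×ˢ (univ : Set ℝ))).toReal)
    (hFY : ∀ y, FY y = (μ ((univ : Set ℝ) ×ˢ Iic y)).toReal)
    (hFXcont : Continuous FX) (hFYcont : Continuous FY)
    (S : Set (ℝ × ℝ))
    (hSclosed : IsClosed S) (hSfull : μ Sᶜ = 0)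
    (hSmin : ∀ T : Set (ℝ × ℝ), IsClosed T → μ Tᶜ = 0 → S ⊆ T)
    (hint : (interior S).Nonempty) :
    ¬ ∃ (f g : ℝ → ℝ) (c : ℝ), ∀ p ∈ S, FX p.1 * FY p.2 - f p.1 - g p.2 = c :=
  stmt_15_general μ FX FY hFX hFY S hSclosed hSfull hSmin hint
end

section
/- Let μ be a probability measure on ℝ² with continuous marginal cumulative distribution functions F_X and F_Y and support S. If the two-dimensional Lebesgue measure of S is positive, λ₂(S) > 0, then there do not exist functions f : ℝ → ℝ and g : ℝ → ℝ and a constant c such that F_X(x)·F_Y(y) − f(x) − g(y) = c for all (x,y) ∈ S. -/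
/-!
The mixed second difference of `d(x, y) = F_X(x) F_Y(y) - f(x) - g(y)` over a rectangle
`[x₀, x₂] × [y₀, y₂]` is `(F_X(x₂) - F_X(x₀)) (F_Y(y₂) - F_Y(y₀))`, so it suffices to find such a
rectangle with its four corners in `S` and a point `(x₁, y₁)` of `S` strictly inside it: the
support property of that point makes both factors positive, while constancy of `d` on `S` makes
the difference vanish. A set of positive planar measure even contains an `n × n` grid: at a
Lebesgue density point of `S` there is a square `I × J` missing `S` only on a fraction `1/n` of its
area, so by Markov's inequality a positive-measure set of abscissae `x ∈ I` have vertical sections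
missing less than `|J| / n` of `J`, and any `n` of them share a section of positive measure.
-/

open MeasureTheory Set Filter Topology
open scoped ENNReal

theorem Set.Infinite.exists_orderEmbedding_fin_mem {α : Type*} [LinearOrder α] {s : Set α}
    (hs : s.Infinite) (n : ℕ) : ∃ e : Fin n ↪o α, ∀ i, e i ∈ s := by
  obtain ⟨t, hts, rfl⟩ := hs.exists_subset_card_eq n
  exact ⟨t.orderEmbOfFin rfl, fun i => hts (t.orderEmbOfFin_mem rfl i)⟩

theorem exists_closedBall_measure_inter_compl_lt {α : Type*} [MetricSpace α] [MeasurableSpace α]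
    [BorelSpace α] [SecondCountableTopology α] [HasBesicovitchCovering α] [ProperSpace α]
    {μ : Measure α} [IsLocallyFiniteMeasure μ] [μ.IsOpenPosMeasure] {s : Set α}
    (hs : MeasurableSet s) (h : μ s ≠ 0) {ε : ℝ≥0∞} (hε : ε ≠ 0) :
    ∃ x r, μ (sᶜ ∩ Metric.closedBall x r) < ε * μ (Metric.closedBall x r) := by
  obtain ⟨x, hxs, hx⟩ := Measure.exists_mem_of_measure_ne_zero_of_ae h <| ae_restrict_of_ae <|
    Besicovitch.ae_tendsto_measure_inter_div_of_measurableSet μ hs.compl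
  rw [indicator_of_notMem (notMem_compl_iff.2 hxs)] at hx
  obtain ⟨r, hr, hr0⟩ :=
    ((hx.eventually (gt_mem_nhds (pos_iff_ne_zero.2 hε))).and self_mem_nhdsWithin).exists
  exact ⟨x, r, (ENNReal.div_lt_iff (.inl (Metric.measure_closedBall_pos μ x hr0).ne')
    (.inl measure_closedBall_lt_top.ne)).1 hr⟩

section Sections

variable {α β : Type*} [MeasurableSpace β] {ν : Measure β} {S : Set (α × β)}

theorem measure_setOf_measure_preimage_compl_lt_ne_zero [MeasurableSpace α] {μ : Measure α}
    [SFinite ν] (hS : MeasurableSet S) {ε : ℝ≥0∞} (h : μ.prod ν Sᶜ < ε * (μ univ * ν univ)) :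
    μ {x | ν (Prod.mk x ⁻¹' Sᶜ) < ε * ν univ} ≠ 0 := by
  intro h0
  have hae : ∀ᵐ x ∂μ, ε * ν univ ≤ ν (Prod.mk x ⁻¹' Sᶜ) := by
    simpa only [ae_iff, not_le] using h0
  refine h.not_ge ?_
  calc ε * (μ univ * ν univ) = ∫⁻ _, ε * ν univ ∂μ := by rw [lintegral_const]; ring
    _ ≤ ∫⁻ x, ν (Prod.mk x ⁻¹' Sᶜ) ∂μ := lintegral_mono_ae hae
    _ = μ.prod ν Sᶜ := (Measure.prod_apply hS.compl).symm

theorem measure_setOf_forall_mem_ne_zero {ι : Type*} [Fintype ι] (x : ι → α)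
    (h : ∑ i, ν (Prod.mk (x i) ⁻¹' Sᶜ) < ν univ) : ν {y | ∀ i, (x i, y) ∈ S} ≠ 0 := by
  intro h0
  have hcompl : {y | ∀ i, (x i, y) ∈ S}ᶜ = ⋃ i, Prod.mk (x i) ⁻¹' Sᶜ := by ext; simp
  refine h.not_ge ?_
  calc ν univ ≤ ν {y | ∀ i, (x i, y) ∈ S} + ν {y | ∀ i, (x i, y) ∈ S}ᶜ :=
        measure_univ_le_add_compl _
    _ ≤ ∑ i, ν (Prod.mk (x i) ⁻¹' Sᶜ) := by
        rw [h0, zero_add, hcompl]; exact measure_iUnion_fintype_le ν _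

end Sections

theorem exists_grid_subset_of_volume_ne_zero {S : Set (ℝ × ℝ)} (hS : MeasurableSet S)
    (h : volume S ≠ 0) (n : ℕ) : ∃ x y : Fin n ↪o ℝ, ∀ i j, (x i, y j) ∈ S := by
  obtain rfl | hn := eq_or_ne n 0
  · exact ⟨OrderEmbedding.ofIsEmpty, OrderEmbedding.ofIsEmpty, fun i => i.elim0⟩
  have hinf : ∀ {s t : Set ℝ}, volume.restrict t s ≠ 0 → s.Infinite :=
    fun hs hfin => hs (hfin.measure_zero _)
  obtain ⟨p, r, hball⟩ := exists_closedBall_measure_inter_compl_lt hS h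
    (ENNReal.inv_ne_zero.2 (ENNReal.natCast_ne_top n))
  set μ := volume.restrict (Metric.closedBall p.1 r)
  set ν := volume.restrict (Metric.closedBall p.2 r)
  have hbox : μ.prod ν Sᶜ < (n : ℝ≥0∞)⁻¹ * (μ univ * ν univ) := by
    rwa [Measure.prod_restrict, Measure.restrict_apply hS.compl, Measure.restrict_apply_univ,
      Measure.restrict_apply_univ, ← Measure.prod_prod, ← Measure.volume_eq_prod,
      closedBall_prod_same]
  obtain ⟨x, hx⟩ := Set.Infinite.exists_orderEmbedding_fin_mem
    (hinf (measure_setOf_measure_preimage_compl_lt_ne_zero hS hbox)) n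
  have hsum : ∑ i, ν (Prod.mk (x i) ⁻¹' Sᶜ) < ν univ :=
    calc ∑ i, ν (Prod.mk (x i) ⁻¹' Sᶜ) < ∑ _ : Fin n, (n : ℝ≥0∞)⁻¹ * ν univ :=
          ENNReal.sum_lt_sum_of_nonempty ⟨⟨0, Nat.pos_of_ne_zero hn⟩, Finset.mem_univ _⟩
            fun i _ => hx i
      _ = ν univ := by
          rw [Finset.sum_const, Finset.card_univ, Fintype.card_fin, nsmul_eq_mul, ← mul_assoc,
            ENNReal.mul_inv_cancel (Nat.cast_ne_zero.2 hn) (ENNReal.natCast_ne_top n), one_mul]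
  obtain ⟨y, hy⟩ := (hinf (measure_setOf_forall_mem_ne_zero x hsum)).exists_orderEmbedding_fin_mem n
  exact ⟨x, y, fun i j => hy j i⟩

theorem toReal_measure_Iic_lt_of_measure_Ioo_ne_zero {ν : Measure ℝ} [IsFiniteMeasure ν]
    {a b : ℝ} (h : ν (Ioo a b) ≠ 0) : (ν (Iic a)).toReal < (ν (Iic b)).toReal := by
  obtain ⟨c, hac, hcb⟩ := nonempty_of_measure_ne_zero h
  refine ENNReal.toReal_strict_mono (measure_ne_top _ _) ?_
  rw [← Iic_union_Ioc_eq_Iic (hac.trans hcb).le,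
    measure_union (Iic_disjoint_Ioc le_rfl) measurableSet_Ioc]
  exact ENNReal.lt_add_right (measure_ne_top _ _)
    fun h0 => h (measure_mono_null Ioo_subset_Ioc_self h0)

section Support

variable {α : Type*} [TopologicalSpace α] [MeasurableSpace α] {μ : Measure α} {S : Set α}

theorem measure_ne_zero_of_isOpen_of_mem (hS : ∀ T, IsClosed T → μ Tᶜ = 0 → S ⊆ T) {p : α}
    (hp : p ∈ S) {U : Set α} (hU : IsOpen U) (hpU : p ∈ U) : μ U ≠ 0 :=
  fun h0 => hS Uᶜ hU.isClosed_compl (by rwa [compl_compl]) hp hpU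

theorem toReal_map_measure_Iic_lt_of_mem [OpensMeasurableSpace α] [IsFiniteMeasure μ]
    (hS : ∀ T, IsClosed T → μ Tᶜ = 0 → S ⊆ T) {φ : α → ℝ} (hφ : Continuous φ) {p : α}
    (hp : p ∈ S) {a b : ℝ} (ha : a < φ p) (hb : φ p < b) :
    (μ.map φ (Iic a)).toReal < (μ.map φ (Iic b)).toReal := by
  refine toReal_measure_Iic_lt_of_measure_Ioo_ne_zero ?_
  rw [Measure.map_apply hφ.measurable measurableSet_Ioo]
  exact measure_ne_zero_of_isOpen_of_mem hS hp (isOpen_Ioo.preimage hφ) ⟨ha, hb⟩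

end Support

theorem stmt_16_general
    (μ : Measure (ℝ × ℝ)) [IsProbabilityMeasure μ]
    (FX FY : ℝ → ℝ)
    (hFX : ∀ x, FX x = (μ (Iic x ×ˢ (univ : Set ℝ))).toReal)
    (hFY : ∀ y, FY y = (μ ((univ : Set ℝ) ×ˢ Iic y)).toReal)
    (S : Set (ℝ × ℝ))
    (hSclosed : IsClosed S)
    (hSmin : ∀ T : Set (ℝ × ℝ), IsClosed T → μ Tᶜ = 0 → S ⊆ T)
    (hSvol : 0 < volume S) :
    ¬ ∃ (f g : ℝ → ℝ) (c : ℝ), ∀ p ∈ S, FX p.1 * FY p.2 - f p.1 - g p.2 = c := by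
  rintro ⟨f, g, c, h⟩
  obtain ⟨x, y, hxy⟩ := exists_grid_subset_of_volume_ne_zero hSclosed.measurableSet hSvol.ne' 3
  have hFX' : ∀ a, FX a = (μ.map Prod.fst (Iic a)).toReal := fun a => by
    rw [hFX, Measure.map_apply measurable_fst measurableSet_Iic, prod_univ]
  have hFY' : ∀ a, FY a = (μ.map Prod.snd (Iic a)).toReal := fun a => by
    rw [hFY, Measure.map_apply measurable_snd measurableSet_Iic, univ_prod]
  have hX : FX (x 0) < FX (x 2) := by
    rw [hFX', hFX']
    exact toReal_map_measure_Iic_lt_of_mem hSmin continuous_fst (hxy 1 1)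
      (x.strictMono (by decide)) (x.strictMono (by decide))
  have hY : FY (y 0) < FY (y 2) := by
    rw [hFY', hFY']
    exact toReal_map_measure_Iic_lt_of_mem hSmin continuous_snd (hxy 1 1)
      (y.strictMono (by decide)) (y.strictMono (by decide))
  have hrect : (FX (x 2) - FX (x 0)) * (FY (y 2) - FY (y 0)) = 0 := by
    linear_combination h _ (hxy 2 2) - h _ (hxy 2 0) - h _ (hxy 0 2) + h _ (hxy 0 0)
  exact (mul_pos (sub_pos.2 hX) (sub_pos.2 hY)).ne' hrect

theorem stmt_16
    (μ : Measure (ℝ × ℝ)) [IsProbabilityMeasure μ]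
    (FX FY : ℝ → ℝ)
    (hFX : ∀ x, FX x = (μ (Iic x ×ˢ (univ : Set ℝ))).toReal)
    (hFY : ∀ y, FY y = (μ ((univ : Set ℝ) ×ˢ Iic y)).toReal)
    (hFXcont : Continuous FX) (hFYcont : Continuous FY)
    (S : Set (ℝ × ℝ))
    (hSclosed : IsClosed S) (hSfull : μ Sᶜ = 0)
    (hSmin : ∀ T : Set (ℝ × ℝ), IsClosed T → μ Tᶜ = 0 → S ⊆ T)
    (hSvol : 0 < volume S) :
    ¬ ∃ (f g : ℝ → ℝ) (c : ℝ), ∀ p ∈ S, FX p.1 * FY p.2 - f p.1 - g p.2 = c :=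
  stmt_16_general μ FX FY hFX hFY S hSclosed hSmin hSvol
end
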